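/- arXiv:1905.13721 — 2 statements merged into one kernel-verified Lean document; each statement's English description precedes it below -/
import Mathlib

section
/- Let V be a finite-dimensional inner product space, let ε be a self-adjoint involution on V (the ℤ₂-grading operator), and let D be a self-adjoint operator on V that anticommutes with ε. Then for all t > 0, Tr(ε ∘ exp(-t D²)) is constant in t, and equals Tr(ε ∘ P) where P is the orthogonal projection onto ker D. In particular, Tr(ε exp(-tD²)) = dim ker(D restricted to the +1 eigenspace of ε) − dim ker(D restricted to the −1 eigenspace of ε). -/
/-!
Diagonalising the symmetric operator `D²` and choosing a polynomial `q` with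
`μ q(μ) = exp (-t μ)` at the nonzero eigenvalues `μ` of `D²` gives
`exp (-t D²) = P + D (D q(D²))`. As `ε` anticommutes with `D` and `D` commutes with
`C = D q(D²)`, cyclicity of the trace gives `Tr (ε D C) = -Tr (ε D C)`, so only `Tr (ε P)`
survives. Finally `ε` preserves `ker D`, and `ε P = ½ (1 + ε) P - ½ (1 - ε) P` is a difference
of projections onto the `±1`-eigenspaces of `ε` inside `ker D`.
-/

open Polynomial

theorem NormedSpace.exp_apply_of_apply_eq_smul {𝕜 E : Type*} [RCLike 𝕜] [NormedAddCommGroup E]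
    [NormedSpace 𝕜 E] [CompleteSpace E] {B : E →L[𝕜] E} {v : E} {c : 𝕜} (h : B v = c • v) :
    exp B v = exp c • v := by
  have hpow (n : ℕ) : (B ^ n) v = c ^ n • v := by
    induction n with
    | zero => simp
    | succ n ih => rw [pow_succ', mul_apply_eq_comp, ih, map_smul, h, smul_smul, pow_succ]
  refine ((exp_series_hasSum_exp' (𝕂 := 𝕜) B).mapL (ContinuousLinearMap.apply 𝕜 E v)).unique ?_
  convert (exp_series_hasSum_exp' (𝕂 := 𝕜) c).smul_const v using 1
  ext n
  simp [hpow, smul_smul]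

theorem LinearMap.IsSymmetric.exists_eq_smul_starProjection_ker_add_mul_aeval {𝕜 E : Type*}
    [RCLike 𝕜] [NormedAddCommGroup E] [InnerProductSpace 𝕜 E] [FiniteDimensional 𝕜 E]
    {T A : E →ₗ[𝕜] E} (hT : T.IsSymmetric) (f : 𝕜 → 𝕜)
    (hA : ∀ (μ : 𝕜) (v : E), T v = μ • v → A v = f μ • v) :
    ∃ p : 𝕜[X], A = f 0 • ((ker T).starProjection : E →ₗ[𝕜] E) + T * aeval T p := by
  classical
  let b := hT.eigenvectorBasis rfl
  let μ : Fin _ → 𝕜 := fun i => hT.eigenvalues rfl i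
  have hb (i) : Module.End.HasEigenvector T (μ i) (b i) := hT.hasEigenvector_eigenvectorBasis rfl i
  let p : 𝕜[X] := Lagrange.interpolate (Finset.univ.image μ) (fun z => z) (fun z => f z / z)
  have hp (i) : p.eval (μ i) = f (μ i) / μ i :=
    Lagrange.eval_interpolate_at_node _ (Set.injOn_id _)
      (Finset.mem_image_of_mem μ (Finset.mem_univ i))
  refine ⟨p, b.toBasis.ext fun i => ?_⟩
  simp only [OrthonormalBasis.coe_toBasis, add_apply, smul_apply, Module.End.mul_apply,
    Module.End.aeval_apply_of_hasEigenvector (hb i), map_smul, (hb i).apply_eq_smul, smul_smul,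
    hA _ _ (hb i).apply_eq_smul, hp, ContinuousLinearMap.coe_coe]
  rcases eq_or_ne (μ i) 0 with h0 | h0
  · have hker : b i ∈ ker T := by simp [(hb i).apply_eq_smul, h0]
    rw [Submodule.starProjection_eq_self_iff.mpr hker, h0]
    simp
  · have hrange : b i ∈ (ker T)ᗮ := by
      rw [← hT.orthogonal_range, Submodule.orthogonal_orthogonal]
      refine ⟨(μ i)⁻¹ • b i, ?_⟩
      rw [map_smul, (hb i).apply_eq_smul, smul_smul, inv_mul_cancel₀ h0, one_smul]
    rw [(Submodule.starProjection_apply_eq_zero_iff _).mpr hrange, smul_zero, zero_add,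
      div_mul_cancel₀ _ h0]

theorem IsSelfAdjoint.exists_exp_neg_smul_eq_starProjection_ker_add_mul_aeval {𝕜 E : Type*}
    [RCLike 𝕜] [NormedAddCommGroup E] [InnerProductSpace 𝕜 E] [FiniteDimensional 𝕜 E]
    [CompleteSpace E] {T : E →L[𝕜] E} (hT : IsSelfAdjoint T) (t : 𝕜) :
    ∃ p : 𝕜[X], ((NormedSpace.exp (-(t • T)) : E →L[𝕜] E) : E →ₗ[𝕜] E) =
      (LinearMap.ker (T : E →ₗ[𝕜] E)).starProjection + T * aeval (T : E →ₗ[𝕜] E) p := by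
  obtain ⟨p, hp⟩ := hT.isSymmetric.exists_eq_smul_starProjection_ker_add_mul_aeval
    (A := (NormedSpace.exp (-(t • T)) : E →L[𝕜] E)) (fun μ => NormedSpace.exp (-(t * μ)))
    fun μ v hv => NormedSpace.exp_apply_of_apply_eq_smul (by
      rw [neg_apply, smul_apply, show T v = μ • v from hv, smul_smul, neg_smul])
  refine ⟨p, ?_⟩
  rwa [mul_zero, neg_zero, NormedSpace.exp_zero, one_smul] at hp

theorem LinearMap.trace_mul_mul_eq_zero_of_anticommute {R M : Type*} [CommRing R]
    [IsAddTorsionFree R] [AddCommGroup M] [Module R M] {ε D C : Module.End R M}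
    (hεD : D * ε = -(ε * D)) (hDC : Commute D C) : trace R M (ε * (D * C)) = 0 := by
  refine self_eq_neg.mp ?_
  calc trace R M (ε * (D * C)) = trace R M (C * (D * ε)) := by
        rw [trace_mul_comm, hDC.eq, mul_assoc]
    _ = -trace R M (C * (ε * D)) := by rw [hεD, mul_neg, map_neg]
    _ = -trace R M (ε * (D * C)) := by rw [trace_mul_comm, mul_assoc]

theorem LinearMap.apply_mem_ker_of_anticommute {R M : Type*} [CommRing R] [AddCommGroup M]
    [Module R M] {ε D : Module.End R M} (hεD : D * ε = -(ε * D)) {x : M} (hx : x ∈ ker D) :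
    ε x ∈ ker D := by
  rw [mem_ker, ← Module.End.mul_apply, hεD, neg_apply, Module.End.mul_apply, hx, map_zero,
    neg_zero]

theorem Submodule.isProj_starProjection {𝕜 E : Type*} [RCLike 𝕜] [NormedAddCommGroup E]
    [InnerProductSpace 𝕜 E] (K : Submodule 𝕜 E) [K.HasOrthogonalProjection] :
    LinearMap.IsProj K (K.starProjection : E →ₗ[𝕜] E) :=
  ⟨K.starProjection_apply_mem, fun _ hx => K.starProjection_eq_self_iff.mpr hx⟩

theorem LinearMap.IsProj.inv_two_smul_one_add_smul_mul {R M : Type*} [Field R] [NeZero (2 : R)]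
    [AddCommGroup M] [Module R M] {K : Submodule R M} {ε P : Module.End R M} (hP : IsProj K P)
    (hε : ε * ε = 1) (hεK : ∀ x ∈ K, ε x ∈ K) {s : R} (hs : s * s = 1) :
    IsProj (K ⊓ Module.End.eigenspace ε s) ((2 : R)⁻¹ • ((1 + s • ε) * P)) := by
  have hεε (x : M) : ε (ε x) = x := by rw [← Module.End.mul_apply, hε, Module.End.one_apply]
  refine ⟨fun x => ⟨?_, ?_⟩, fun x ⟨hxK, hxε⟩ => ?_⟩
  · have hPx := hP.map_mem x
    simp only [smul_apply, Module.End.mul_apply, add_apply, Module.End.one_apply]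
    exact K.smul_mem _ (K.add_mem hPx (K.smul_mem s (hεK _ hPx)))
  · rw [SetLike.mem_coe, Module.End.mem_eigenspace_iff]
    simp only [smul_apply, Module.End.mul_apply, add_apply, Module.End.one_apply, map_smul,
      map_add, hεε, smul_add, smul_smul]
    match_scalars
    · linear_combination (-2⁻¹ : R) * hs
    · ring
  · rw [SetLike.mem_coe, Module.End.mem_eigenspace_iff] at hxε
    simp only [smul_apply, Module.End.mul_apply, add_apply, Module.End.one_apply,
      hP.map_id x hxK, hxε, smul_smul, hs]
    match_scalars
    rw [one_mul, one_add_one_eq_two, inv_mul_cancel₀ two_ne_zero]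

theorem LinearMap.IsProj.trace_mul_eq_finrank_sub_finrank {R M : Type*} [Field R]
    [NeZero (2 : R)] [AddCommGroup M] [Module R M] [FiniteDimensional R M] {K : Submodule R M}
    {ε P : Module.End R M} (hP : IsProj K P) (hε : ε * ε = 1) (hεK : ∀ x ∈ K, ε x ∈ K) :
    LinearMap.trace R M (ε * P) = Module.finrank R ↥(K ⊓ Module.End.eigenspace ε 1)
      - Module.finrank R ↥(K ⊓ Module.End.eigenspace ε (-1)) := by
  have hsplit : ε * P =
      (2 : R)⁻¹ • ((1 + (1 : R) • ε) * P) - (2 : R)⁻¹ • ((1 + (-1 : R) • ε) * P) := by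
    rw [add_mul, add_mul, one_mul, smul_mul_assoc, smul_mul_assoc]
    match_scalars <;> field_simp <;> ring
  rw [hsplit, map_sub, (hP.inv_two_smul_one_add_smul_mul hε hεK (one_mul 1)).trace,
    (hP.inv_two_smul_one_add_smul_mul hε hεK (by norm_num)).trace]

theorem mckeanSinger_finiteDimensional_general
    (V : Type*) [NormedAddCommGroup V] [InnerProductSpace ℂ V] [FiniteDimensional ℂ V]
    (ε D : V →L[ℂ] V)
    (hinv : ε * ε = 1)
    (hDsa : ContinuousLinearMap.adjoint D = D)
    (hanti : D * ε = -(ε * D)) :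
    ∀ t : ℝ, 0 < t →
      (LinearMap.trace ℂ V ((ε * NormedSpace.exp (-(t • (D * D)))) : V →ₗ[ℂ] V)
        = LinearMap.trace ℂ V
            ((ε ∘L ((LinearMap.ker (D : V →ₗ[ℂ] V)).subtypeL ∘L
              Submodule.orthogonalProjectionOnto (LinearMap.ker (D : V →ₗ[ℂ] V)))) : V →ₗ[ℂ] V)) ∧
      (LinearMap.trace ℂ V ((ε * NormedSpace.exp (-(t • (D * D)))) : V →ₗ[ℂ] V)
        = (Module.finrank ℂ
            ↥(LinearMap.ker (D : V →ₗ[ℂ] V) ⊓ Module.End.eigenspace (ε : V →ₗ[ℂ] V) 1) : ℂ)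
          - (Module.finrank ℂ
            ↥(LinearMap.ker (D : V →ₗ[ℂ] V) ⊓ Module.End.eigenspace (ε : V →ₗ[ℂ] V) (-1)) : ℂ)) := by
  intro t _
  set K := LinearMap.ker (D : V →ₗ[ℂ] V)
  have hD : IsSelfAdjoint D := hDsa
  have hkerDD : LinearMap.ker ((D : V →ₗ[ℂ] V) * (D : V →ₗ[ℂ] V)) = K := by
    have h := D.ker_adjoint_comp_self
    rwa [hDsa] at h
  have hanti' : (D : V →ₗ[ℂ] V) * (ε : V →ₗ[ℂ] V) = -((ε : V →ₗ[ℂ] V) * (D : V →ₗ[ℂ] V)) := by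
    rw [← ContinuousLinearMap.toLinearMap_mul, hanti, ContinuousLinearMap.toLinearMap_neg,
      ContinuousLinearMap.toLinearMap_mul]
  have hDD : IsSelfAdjoint (D * D) := (hD.commute_iff hD).mp (.refl D)
  obtain ⟨p, hp⟩ := hDD.exists_exp_neg_smul_eq_starProjection_ker_add_mul_aeval (t : ℂ)
  simp only [ContinuousLinearMap.toLinearMap_mul, hkerDD, Complex.coe_smul] at hp
  have hsupertrace : LinearMap.trace ℂ V ((ε * NormedSpace.exp (-(t • (D * D)))) : V →ₗ[ℂ] V) =
      LinearMap.trace ℂ V ((ε : V →ₗ[ℂ] V) * (K.starProjection : V →ₗ[ℂ] V)) := by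
    rw [hp, mul_add, map_add, mul_assoc,
      LinearMap.trace_mul_mul_eq_zero_of_anticommute hanti', add_zero]
    exact (Commute.refl _).mul_right (Algebra.commute_of_mem_adjoin_singleton_of_commute
      (aeval_mem_adjoin_singleton ℂ _) ((Commute.refl _).mul_right (Commute.refl _)))
  have hεε : (ε : V →ₗ[ℂ] V) * (ε : V →ₗ[ℂ] V) = 1 := by
    rw [← ContinuousLinearMap.toLinearMap_mul, hinv]
    rfl
  refine ⟨hsupertrace, hsupertrace.trans ?_⟩
  exact K.isProj_starProjection.trace_mul_eq_finrank_sub_finrank hεε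
    fun _ => LinearMap.apply_mem_ker_of_anticommute hanti'

/-- Finite-dimensional McKean–Singer: for a self-adjoint involution `ε` and a self-adjoint
operator `D` anticommuting with `ε`, the supertrace `Tr(ε exp(-t D²))` is independent of
`t > 0` and equals `Tr(ε P)`, with `P` the orthogonal projection onto `ker D`; it equals
`dim ker(D|_{ε = 1}) − dim ker(D|_{ε = -1})`. -/
theorem mckeanSinger_finiteDimensional
    (V : Type*) [NormedAddCommGroup V] [InnerProductSpace ℂ V] [FiniteDimensional ℂ V]
    (ε D : V →L[ℂ] V)
    (hinv : ε * ε = 1)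
    (hεsa : ContinuousLinearMap.adjoint ε = ε)
    (hDsa : ContinuousLinearMap.adjoint D = D)
    (hanti : D * ε = -(ε * D)) :
    ∀ t : ℝ, 0 < t →
      (LinearMap.trace ℂ V ((ε * NormedSpace.exp (-(t • (D * D)))) : V →ₗ[ℂ] V)
        = LinearMap.trace ℂ V
            ((ε ∘L ((LinearMap.ker (D : V →ₗ[ℂ] V)).subtypeL ∘L
              Submodule.orthogonalProjectionOnto (LinearMap.ker (D : V →ₗ[ℂ] V)))) : V →ₗ[ℂ] V)) ∧
      (LinearMap.trace ℂ V ((ε * NormedSpace.exp (-(t • (D * D)))) : V →ₗ[ℂ] V)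
        = (Module.finrank ℂ
            ↥(LinearMap.ker (D : V →ₗ[ℂ] V) ⊓ Module.End.eigenspace (ε : V →ₗ[ℂ] V) 1) : ℂ)
          - (Module.finrank ℂ
            ↥(LinearMap.ker (D : V →ₗ[ℂ] V) ⊓ Module.End.eigenspace (ε : V →ₗ[ℂ] V) (-1)) : ℂ)) :=
  mckeanSinger_finiteDimensional_general V ε D hinv hDsa hanti
end

section
/- Let V be a finite-dimensional inner product space with a self-adjoint involution ε, and let D(u) be a smooth one-parameter family of self-adjoint operators on V anticommuting with ε. Then the function u ↦ Tr(ε ∘ exp(-D(u)²)) is constant. -/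
open Nat NormedSpace

/-- Odd powers of `d` anticommute with `e` if `d` does. -/
lemma aux_pow_anticomm {V : Type*} [AddCommGroup V] [Module ℂ V]
    (e d : V →ₗ[ℂ] V) (h : d * e = -(e * d)) :
    ∀ n : ℕ, d ^ (2 * n + 1) * e = -(e * d ^ (2 * n + 1)) := by
  intro n
  induction n with
  | zero => simpa using h
  | succ k ih =>
      have h2 : (2 : ℕ) * (k + 1) + 1 = (2 * k + 1) + 2 := by ring
      rw [h2, pow_add]
      calc d ^ (2 * k + 1) * d ^ 2 * e
          = d ^ (2 * k + 1) * (d * (d * e)) := by noncomm_ring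
        _ = d ^ (2 * k + 1) * (d * (-(e * d))) := by rw [h]
        _ = -(d ^ (2 * k + 1) * ((d * e) * d)) := by noncomm_ring
        _ = -(d ^ (2 * k + 1) * ((-(e * d)) * d)) := by rw [h]
        _ = (d ^ (2 * k + 1) * e) * (d * d) := by noncomm_ring
        _ = (-(e * d ^ (2 * k + 1))) * (d * d) := by rw [ih]
        _ = -(e * (d ^ (2 * k + 1) * d ^ 2)) := by noncomm_ring

/-- For `d` anticommuting with `e`, the trace of `e * d^(2n+2)` vanishes. -/
lemma aux_trace_zero (V : Type*) [AddCommGroup V] [Module ℂ V] [Module.Finite ℂ V]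
    [Module.Free ℂ V]
    (e d : V →ₗ[ℂ] V) (h : d * e = -(e * d)) (n : ℕ) :
    LinearMap.trace ℂ V (e * d ^ (2 * n + 2)) = 0 := by
  have hsplit : d ^ (2 * n + 2) = d ^ (2 * n + 1) * d := by
    rw [← pow_succ]
  have key : LinearMap.trace ℂ V (e * d ^ (2 * n + 2))
      = -(LinearMap.trace ℂ V (e * d ^ (2 * n + 2))) := by
    calc LinearMap.trace ℂ V (e * d ^ (2 * n + 2))
        = LinearMap.trace ℂ V ((e * d ^ (2 * n + 1)) * d) := by
          rw [hsplit, mul_assoc]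
      _ = LinearMap.trace ℂ V (d * (e * d ^ (2 * n + 1))) := by
          rw [LinearMap.trace_mul_comm]
      _ = LinearMap.trace ℂ V ((d * e) * d ^ (2 * n + 1)) := by rw [mul_assoc]
      _ = LinearMap.trace ℂ V ((-(e * d)) * d ^ (2 * n + 1)) := by rw [h]
      _ = -(LinearMap.trace ℂ V (e * (d * d ^ (2 * n + 1)))) := by
          rw [neg_mul, map_neg, mul_assoc]
      _ = -(LinearMap.trace ℂ V (e * d ^ (2 * n + 2))) := by
          have hd : d * d ^ (2 * n + 1) = d ^ (2 * n + 2) := by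
            calc d * d ^ (2 * n + 1) = d ^ 1 * d ^ (2 * n + 1) := by rw [pow_one]
              _ = d ^ (1 + (2 * n + 1)) := (pow_add d 1 (2 * n + 1)).symm
              _ = d ^ (2 * n + 2) := by ring_nf
          rw [hd]
  have := add_eq_zero_iff_eq_neg.mpr key
  have h2 : (2 : ℂ) * LinearMap.trace ℂ V (e * d ^ (2 * n + 2)) = 0 := by
    rw [two_mul]; linear_combination this
  have := mul_eq_zero.mp h2
  simpa using this

/-- The supertrace of `exp (-(D*D))` equals the trace of `ε`. -/
lemma aux_str_exp (V : Type*) [NormedAddCommGroup V] [InnerProductSpace ℂ V]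
    [FiniteDimensional ℂ V]
    (ε D : V →L[ℂ] V) (hanti : D * ε = -(ε * D)) :
    LinearMap.trace ℂ V ((ε * NormedSpace.exp (-(D * D))) : V →ₗ[ℂ] V)
      = LinearMap.trace ℂ V (ε : V →ₗ[ℂ] V) := by
  -- the coercion to linear maps, as a ring hom
  let R : (V →L[ℂ] V) →+* (V →ₗ[ℂ] V) := ContinuousLinearMap.toLinearMapRingHom
  have hR : ∀ X : V →L[ℂ] V, R X = (X : V →ₗ[ℂ] V) := fun _ => rfl
  -- the supertrace functional, as a continuous linear map
  let T₀ : (V →L[ℂ] V) →ₗ[ℂ] ℂ :=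
    (LinearMap.trace ℂ V) ∘ₗ (LinearMap.mulLeft ℂ (ε : V →ₗ[ℂ] V)) ∘ₗ
      (ContinuousLinearMap.coeLM ℂ)
  let T : (V →L[ℂ] V) →L[ℂ] ℂ := LinearMap.toContinuousLinearMap T₀
  have hT : ∀ X : V →L[ℂ] V,
      T X = LinearMap.trace ℂ V ((ε : V →ₗ[ℂ] V) * (X : V →ₗ[ℂ] V)) := by
    intro X
    simp [T, T₀, LinearMap.mulLeft_apply]
  set A : V →L[ℂ] V := -(D * D) with hA
  have hsum : Summable fun n : ℕ => ((n ! : ℂ)⁻¹) • A ^ n :=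
    NormedSpace.expSeries_summable' (𝕂 := ℂ) A
  have hexp : NormedSpace.exp A = ∑' n : ℕ, ((n ! : ℂ)⁻¹) • A ^ n :=
    congrFun (NormedSpace.exp_eq_tsum (𝕂 := ℂ)) A
  have hmap : T (NormedSpace.exp A) = ∑' n : ℕ, T (((n ! : ℂ)⁻¹) • A ^ n) := by
    rw [hexp]
    exact T.map_tsum hsum
  set e : V →ₗ[ℂ] V := (ε : V →ₗ[ℂ] V) with he
  set d : V →ₗ[ℂ] V := (D : V →ₗ[ℂ] V) with hd
  have hanti' : d * e = -(e * d) := by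
    have := congrArg R hanti
    simpa [map_mul, map_neg, hR, he, hd] using this
  -- each term with n ≥ 1 vanishes
  have hterm : ∀ n : ℕ, n ≠ 0 → T (((n ! : ℂ)⁻¹) • A ^ n) = 0 := by
    intro n hn
    obtain ⟨m, rfl⟩ := Nat.exists_eq_succ_of_ne_zero hn
    rw [map_smul, hT, smul_eq_mul]
    have hcoe : ((A ^ (m + 1) : V →L[ℂ] V) : V →ₗ[ℂ] V)
        = (-(d * d)) ^ (m + 1) := by
      rw [← hR, map_pow]
      exact congrArg (· ^ (m + 1)) rfl
    have hnegpow : (-(d * d)) ^ (m + 1) = ((-1 : ℂ) ^ (m + 1)) • d ^ (2 * (m + 1)) := by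
      have h1 : -(d * d) = (-1 : ℂ) • (d * d) := by simp
      rw [h1, smul_pow]
      congr 1
      rw [← sq, ← pow_mul, Nat.mul_comm]
    rw [hcoe, hnegpow, mul_smul_comm, map_smul]
    have h0 : LinearMap.trace ℂ V (e * d ^ (2 * m + 2)) = 0 := aux_trace_zero V e d hanti' m
    have h2m : 2 * (m + 1) = 2 * m + 2 := by ring
    rw [h2m, h0]
    simp
  have htsum : (∑' n : ℕ, T (((n ! : ℂ)⁻¹) • A ^ n)) = T (((0 ! : ℂ)⁻¹) • A ^ 0) :=
    tsum_eq_single 0 hterm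
  have h0 : T (((0 ! : ℂ)⁻¹) • A ^ 0) = LinearMap.trace ℂ V (ε : V →ₗ[ℂ] V) := by
    rw [map_smul, hT]
    simp only [pow_zero]
    rw [show ((1 : V →L[ℂ] V) : V →ₗ[ℂ] V) = 1 from rfl, mul_one]
    simp [he]
  have hfin := hT (NormedSpace.exp A)
  calc LinearMap.trace ℂ V ((ε : V →ₗ[ℂ] V) * ((NormedSpace.exp A : V →L[ℂ] V) : V →ₗ[ℂ] V))
      = T (NormedSpace.exp A) := (hT _).symm
    _ = T (((0 ! : ℂ)⁻¹) • A ^ 0) := by rw [hmap, htsum]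
    _ = LinearMap.trace ℂ V (ε : V →ₗ[ℂ] V) := h0

/-- Homotopy invariance of the index (finite-dimensional model): for a smooth one-parameter
family `D u` of self-adjoint operators anticommuting with a self-adjoint involution `ε`,
the supertrace `u ↦ Tr(ε exp(-D(u)²))` is constant. -/
theorem supertrace_exp_constant_in_family
    (V : Type*) [NormedAddCommGroup V] [InnerProductSpace ℂ V] [FiniteDimensional ℂ V]
    (ε : V →L[ℂ] V) (D : ℝ → V →L[ℂ] V)
    (hsmooth : ContDiff ℝ (⊤ : ℕ∞) D)
    (hinv : ε * ε = 1)
    (hεsa : ContinuousLinearMap.adjoint ε = ε)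
    (hDsa : ∀ u : ℝ, ContinuousLinearMap.adjoint (D u) = D u)
    (hanti : ∀ u : ℝ, D u * ε = -(ε * D u)) :
    ∀ u v : ℝ,
      LinearMap.trace ℂ V ((ε * NormedSpace.exp (-(D u * D u))) : V →ₗ[ℂ] V)
        = LinearMap.trace ℂ V ((ε * NormedSpace.exp (-(D v * D v))) : V →ₗ[ℂ] V) := by
  intro u v
  rw [aux_str_exp V ε (D u) (hanti u), aux_str_exp V ε (D v) (hanti v)]
end
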